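/- Let n ≥ 3. The subgroup of W(C̃_n) generated by r_1, r_2, …, r_n, s is exactly {w ∈ W(C̃_n) : Σw is even} = W(B̃_n), and this subgroup has index 2 in W(C̃_n). -/

import Mathlib

noncomputable section

open Equiv Finset

/-- Points `±1, …, ±n`, encoded as a sign together with an index. -/
abbrev Pt (n : ℕ) := ℤˣ × Fin n

/-- Negation of a point. -/
def negPt {n : ℕ} (x : Pt n) : Pt n := (-x.1, x.2)

/-- The hyperoctahedral group `H_n` of signed permutations: bijections `σ` of `{±1,…,±n}`
with `σ(-i) = -σ(i)`. -/
def Hgrp (n : ℕ) : Subgroup (Equiv.Perm (Pt n)) where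
  carrier := {σ | ∀ x, σ (negPt x) = negPt (σ x)}
  one_mem' := fun _ => rfl
  mul_mem' := by
    intro σ τ hσ hτ x
    have hσ' : ∀ y, σ (negPt y) = negPt (σ y) := hσ
    have hτ' : ∀ y, τ (negPt y) = negPt (τ y) := hτ
    simp only [Equiv.Perm.mul_apply]
    rw [hτ' x, hσ' (τ x)]
  inv_mem' := by
    intro σ hσ x
    have hσ' : ∀ y, σ (negPt y) = negPt (σ y) := hσ
    apply σ.injective
    rw [hσ']
    simp

lemma Hgrp_apply {n : ℕ} {σ : Equiv.Perm (Pt n)} (hσ : σ ∈ Hgrp n) (δ : ℤˣ) (k : Fin n) :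
    σ (δ, k) = (δ * (σ (1, k)).1, (σ (1, k)).2) := by
  have hσ' : ∀ y, σ (negPt y) = negPt (σ y) := hσ
  rcases Int.units_eq_one_or δ with h | h <;> subst h
  · simp
  · have h2 := hσ' (1, k)
    simp only [negPt] at h2
    simpa using h2

/-- The (right) action of a signed permutation on integer vectors:
`(v^σ)_j = ε·v_i` whenever `σ(i) = ε j`. -/
def actV {n : ℕ} (σ : Equiv.Perm (Pt n)) (v : Fin n → ℤ) : Fin n → ℤ :=
  fun j => ((σ (1, j)).1 : ℤ) * v (σ (1, j)).2

lemma actV_add {n : ℕ} (σ : Equiv.Perm (Pt n)) (a b : Fin n → ℤ) :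
    actV σ (a + b) = actV σ a + actV σ b := by
  funext j; simp [actV, mul_add]

lemma actV_zero {n : ℕ} (σ : Equiv.Perm (Pt n)) : actV σ 0 = 0 := by
  funext j; simp [actV]

lemma actV_neg {n : ℕ} (σ : Equiv.Perm (Pt n)) (v : Fin n → ℤ) :
    actV σ (-v) = -actV σ v := by
  funext j; simp [actV]

lemma actV_one {n : ℕ} (v : Fin n → ℤ) : actV 1 v = v := by
  funext j; simp [actV]

lemma actV_mul {n : ℕ} {σ : Equiv.Perm (Pt n)} (hσ : σ ∈ Hgrp n) (τ : Equiv.Perm (Pt n))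
    (v : Fin n → ℤ) : actV (σ * τ) v = actV τ (actV σ v) := by
  funext j
  have h := Hgrp_apply hσ (τ (1, j)).1 (τ (1, j)).2
  rw [Prod.mk.eta] at h
  simp only [actV, Equiv.Perm.mul_apply, h]
  push_cast
  ring

/-- The affine Weyl group of type `C̃ₙ`: pairs `(σ, v)` with `σ` a signed permutation and
`v ∈ ℤⁿ`, with multiplication `(σ,v)(τ,u) = (στ, v^τ + u)`. -/
@[ext] structure WC (n : ℕ) where
  sigma : Hgrp n
  vec : Fin n → ℤ

namespace WC

variable {n : ℕ}

instance : Mul (WC n) :=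
  ⟨fun x y => ⟨x.sigma * y.sigma, actV (y.sigma : Equiv.Perm (Pt n)) x.vec + y.vec⟩⟩

instance : One (WC n) := ⟨⟨1, 0⟩⟩

instance : Inv (WC n) :=
  ⟨fun x => ⟨x.sigma⁻¹, -actV ((x.sigma⁻¹ : Hgrp n) : Equiv.Perm (Pt n)) x.vec⟩⟩

@[simp] lemma mul_sigma (x y : WC n) : (x * y).sigma = x.sigma * y.sigma := rfl
@[simp] lemma mul_vec (x y : WC n) :
    (x * y).vec = actV (y.sigma : Equiv.Perm (Pt n)) x.vec + y.vec := rfl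
@[simp] lemma one_sigma : (1 : WC n).sigma = 1 := rfl
@[simp] lemma one_vec : (1 : WC n).vec = 0 := rfl
@[simp] lemma inv_sigma (x : WC n) : (x⁻¹).sigma = x.sigma⁻¹ := rfl
@[simp] lemma inv_vec (x : WC n) :
    (x⁻¹).vec = -actV ((x.sigma⁻¹ : Hgrp n) : Equiv.Perm (Pt n)) x.vec := rfl

instance : Group (WC n) where
  mul_assoc a b c := by
    refine WC.ext ?_ ?_
    · exact mul_assoc _ _ _
    · show actV (c.sigma : Equiv.Perm (Pt n))
          (actV (b.sigma : Equiv.Perm (Pt n)) a.vec + b.vec) + c.vec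
        = actV (((b.sigma * c.sigma : Hgrp n)) : Equiv.Perm (Pt n)) a.vec
          + (actV (c.sigma : Equiv.Perm (Pt n)) b.vec + c.vec)
      rw [actV_add]
      have hc : (((b.sigma * c.sigma : Hgrp n)) : Equiv.Perm (Pt n))
          = (b.sigma : Equiv.Perm (Pt n)) * (c.sigma : Equiv.Perm (Pt n)) := rfl
      rw [hc, actV_mul b.sigma.2]
      abel
  one_mul a := by
    refine WC.ext (one_mul _) ?_
    show actV (a.sigma : Equiv.Perm (Pt n)) 0 + a.vec = a.vec
    rw [actV_zero, zero_add]
  mul_one a := by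
    refine WC.ext (mul_one _) ?_
    show actV ((1 : Hgrp n) : Equiv.Perm (Pt n)) a.vec + 0 = a.vec
    have h1 : ((1 : Hgrp n) : Equiv.Perm (Pt n)) = 1 := rfl
    rw [h1, actV_one, add_zero]
  inv_mul_cancel a := by
    refine WC.ext (inv_mul_cancel _) ?_
    show actV (a.sigma : Equiv.Perm (Pt n))
        (-actV ((a.sigma⁻¹ : Hgrp n) : Equiv.Perm (Pt n)) a.vec) + a.vec = 0
    rw [actV_neg, ← actV_mul (a.sigma⁻¹ : Hgrp n).2]
    have h1 : ((a.sigma⁻¹ : Hgrp n) : Equiv.Perm (Pt n)) * (a.sigma : Equiv.Perm (Pt n)) = 1 := by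
      rw [← Subgroup.coe_mul, inv_mul_cancel, Subgroup.coe_one]
    rw [h1, actV_one, neg_add_cancel]

end WC

/-- `Σw`: the coordinate sum of the translation part. -/
def sumV {n : ℕ} (x : WC n) : ℤ := ∑ i, x.vec i

/-- `minus(w)`: the number of `i ∈ {1,…,n}` with `σ(i) < 0`. -/
def minusCard {n : ℕ} (x : WC n) : ℕ :=
  (Finset.univ.filter fun i : Fin n => ((x.sigma : Equiv.Perm (Pt n)) (1, i)).1 = -1).card
lemma permOf_bij {n : ℕ} (σ : Hgrp n) :
    Function.Bijective (fun i : Fin n => ((σ : Equiv.Perm (Pt n)) (1, i)).2) := by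
  rw [Fintype.bijective_iff_injective_and_card]
  refine ⟨?_, rfl⟩
  intro i j hij
  simp only at hij
  have hmem : ∀ y, (σ : Equiv.Perm (Pt n)) (negPt y) = negPt ((σ : Equiv.Perm (Pt n)) y) := σ.2
  by_cases h1 : ((σ : Equiv.Perm (Pt n)) (1, i)).1 = ((σ : Equiv.Perm (Pt n)) (1, j)).1
  · have heq : (σ : Equiv.Perm (Pt n)) (1, i) = (σ : Equiv.Perm (Pt n)) (1, j) :=
      Prod.ext h1 hij
    have h2 := (σ : Equiv.Perm (Pt n)).injective heq
    exact congrArg Prod.snd h2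
  · exfalso
    have hfst : ((σ : Equiv.Perm (Pt n)) (1, i)).1 = -((σ : Equiv.Perm (Pt n)) (1, j)).1 := by
      rcases Int.units_eq_one_or ((σ : Equiv.Perm (Pt n)) (1, i)).1 with ha | ha <;>
        rcases Int.units_eq_one_or ((σ : Equiv.Perm (Pt n)) (1, j)).1 with hb | hb <;>
        first
          | exact absurd (ha.trans hb.symm) h1
          | simp [ha, hb]
    have hne : (σ : Equiv.Perm (Pt n)) (1, i) = negPt ((σ : Equiv.Perm (Pt n)) (1, j)) :=
      Prod.ext hfst hij
    rw [← hmem (1, j)] at hne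
    have h3 := (σ : Equiv.Perm (Pt n)).injective hne
    have h4 := congrArg Prod.fst h3
    simp only [negPt] at h4
    exact absurd h4 (by decide)

/-- The underlying (unsigned) permutation of `{1,…,n}` induced by a signed permutation. -/
def permOf {n : ℕ} (σ : Hgrp n) : Equiv.Perm (Fin n) :=
  Equiv.ofBijective _ (permOf_bij σ)

@[simp] lemma permOf_apply {n : ℕ} (σ : Hgrp n) (i : Fin n) :
    permOf σ i = ((σ : Equiv.Perm (Pt n)) (1, i)).2 := rfl

lemma unitsCast_zmod2 (ε : ℤˣ) : (((ε : ℤ) : ZMod 2)) = 1 := by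
  rcases Int.units_eq_one_or ε with h | h <;> subst h <;> decide

lemma sumV_mul {n : ℕ} (x y : WC n) :
    ((sumV (x * y) : ℤ) : ZMod 2) = ((sumV x : ℤ) : ZMod 2) + ((sumV y : ℤ) : ZMod 2) := by
  have key : ∀ (σ : Hgrp n) (v : Fin n → ℤ),
      (∑ i, ((actV (σ : Equiv.Perm (Pt n)) v i : ℤ) : ZMod 2)) = ∑ i, ((v i : ℤ) : ZMod 2) := by
    intro σ v
    have hterm : ∀ i, ((actV (σ : Equiv.Perm (Pt n)) v i : ℤ) : ZMod 2)
        = ((v (permOf σ i) : ℤ) : ZMod 2) := by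
      intro i
      show ((((((σ : Equiv.Perm (Pt n)) (1, i)).1 : ℤ)) * v (((σ : Equiv.Perm (Pt n)) (1, i)).2) : ℤ) : ZMod 2) = _
      push_cast
      rw [unitsCast_zmod2, one_mul]
      rfl
    rw [Finset.sum_congr rfl (fun i _ => hterm i)]
    exact Equiv.sum_comp (permOf σ) (fun i => ((v i : ℤ) : ZMod 2))
  have hvec : (x * y).vec = actV (y.sigma : Equiv.Perm (Pt n)) x.vec + y.vec := rfl
  unfold sumV
  rw [hvec]
  have hsplit : (∑ i, (actV (y.sigma : Equiv.Perm (Pt n)) x.vec + y.vec) i)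
      = (∑ i, actV (y.sigma : Equiv.Perm (Pt n)) x.vec i) + ∑ i, y.vec i := by
    rw [← Finset.sum_add_distrib]; rfl
  rw [hsplit]
  push_cast
  rw [key y.sigma x.vec]

lemma minusCard_one {n : ℕ} : minusCard (1 : WC n) = 0 := by
  unfold minusCard
  rw [Finset.card_eq_zero, Finset.filter_eq_empty_iff]
  intro i _
  show ¬ (((1 : Hgrp n) : Equiv.Perm (Pt n)) (1, i)).1 = -1
  simp only [OneMemClass.coe_one, Equiv.Perm.one_apply]
  decide

lemma ite_units_mul (u w : ℤˣ) :
    ((if u * w = -1 then (1 : ZMod 2) else 0)) =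
      (if u = -1 then (1 : ZMod 2) else 0) + (if w = -1 then (1 : ZMod 2) else 0) := by
  rcases Int.units_eq_one_or u with h | h <;> rcases Int.units_eq_one_or w with h' | h' <;>
    subst h <;> subst h' <;> decide

lemma minusCard_mul {n : ℕ} (x y : WC n) :
    ((minusCard (x * y) : ℕ) : ZMod 2) = (minusCard x : ZMod 2) + (minusCard y : ZMod 2) := by
  have hσ : ∀ i : Fin n, ((x * y).sigma : Equiv.Perm (Pt n)) (1, i)
      = (x.sigma : Equiv.Perm (Pt n)) ((y.sigma : Equiv.Perm (Pt n)) (1, i)) := fun i => rfl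
  unfold minusCard
  rw [Finset.card_filter, Finset.card_filter, Finset.card_filter]
  push_cast
  have step : ∀ i : Fin n,
      ((if (((x * y).sigma : Equiv.Perm (Pt n)) (1, i)).1 = -1 then (1 : ZMod 2) else 0))
      = (if ((y.sigma : Equiv.Perm (Pt n)) (1, i)).1 = -1 then (1 : ZMod 2) else 0)
        + (if ((x.sigma : Equiv.Perm (Pt n)) (1, permOf y.sigma i)).1 = -1
            then (1 : ZMod 2) else 0) := by
    intro i
    rw [hσ i]
    have h := Hgrp_apply x.sigma.2 ((y.sigma : Equiv.Perm (Pt n)) (1, i)).1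
      ((y.sigma : Equiv.Perm (Pt n)) (1, i)).2
    rw [Prod.mk.eta] at h
    rw [h]
    exact ite_units_mul _ _
  calc (∑ i : Fin n, if (((x * y).sigma : Equiv.Perm (Pt n)) (1, i)).1 = -1
          then (1 : ZMod 2) else 0)
      = ∑ i : Fin n, ((if ((y.sigma : Equiv.Perm (Pt n)) (1, i)).1 = -1 then (1 : ZMod 2) else 0)
        + (if ((x.sigma : Equiv.Perm (Pt n)) (1, permOf y.sigma i)).1 = -1
            then (1 : ZMod 2) else 0)) := Finset.sum_congr rfl (fun i _ => step i)
    _ = (∑ i : Fin n, if ((y.sigma : Equiv.Perm (Pt n)) (1, i)).1 = -1 then (1 : ZMod 2) else 0)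
        + ∑ i : Fin n, (if ((x.sigma : Equiv.Perm (Pt n)) (1, permOf y.sigma i)).1 = -1
            then (1 : ZMod 2) else 0) := Finset.sum_add_distrib
    _ = (∑ i : Fin n, if ((x.sigma : Equiv.Perm (Pt n)) (1, i)).1 = -1 then (1 : ZMod 2) else 0)
        + ∑ i : Fin n, (if ((y.sigma : Equiv.Perm (Pt n)) (1, i)).1 = -1
            then (1 : ZMod 2) else 0) := by
          rw [add_comm]
          congr 1
          exact Equiv.sum_comp (permOf y.sigma)
            (fun k => if ((x.sigma : Equiv.Perm (Pt n)) (1, k)).1 = -1 then (1 : ZMod 2) else 0)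
lemma even_int_iff_zmod {a : ℤ} : Even a ↔ ((a : ZMod 2) = 0) := by
  rw [ZMod.intCast_zmod_eq_zero_iff_dvd a 2, Int.even_iff]
  push_cast
  omega

lemma sumV_one {n : ℕ} : sumV (1 : WC n) = 0 := by simp [sumV]

/-- The affine Weyl group of type `B̃ₙ`: the elements `w` of `W(C̃ₙ)` with `Σw` even. -/
def WB (n : ℕ) : Subgroup (WC n) where
  carrier := {w | Even (sumV w)}
  one_mem' := by
    show Even (sumV (1 : WC n))
    rw [sumV_one]
    exact Even.zero
  mul_mem' := by
    intro a b ha hb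
    have ha' : ((sumV a : ℤ) : ZMod 2) = 0 := even_int_iff_zmod.mp ha
    have hb' : ((sumV b : ℤ) : ZMod 2) = 0 := even_int_iff_zmod.mp hb
    refine even_int_iff_zmod.mpr ?_
    rw [sumV_mul, ha', hb', add_zero]
  inv_mem' := by
    intro a ha
    have ha' : ((sumV a : ℤ) : ZMod 2) = 0 := even_int_iff_zmod.mp ha
    refine even_int_iff_zmod.mpr ?_
    have h1 := sumV_mul a⁻¹ a
    rw [inv_mul_cancel, sumV_one, ha', add_zero] at h1
    simpa using h1.symm

lemma intModEq_two_iff {a b : ℤ} : a ≡ b [ZMOD 2] ↔ ((a : ZMod 2) = (b : ZMod 2)) :=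
  (ZMod.intCast_eq_intCast_iff a b 2).symm

/-- The second copy `B̄(B̃ₙ)` of the affine Weyl group of type `B̃ₙ` inside `W(C̃ₙ)`:
elements with `Σw ≡ minus(w) (mod 2)`. -/
def Bbar (n : ℕ) : Subgroup (WC n) where
  carrier := {w | sumV w ≡ (minusCard w : ℤ) [ZMOD 2]}
  one_mem' := by
    show sumV (1 : WC n) ≡ ((minusCard (1 : WC n) : ℤ)) [ZMOD 2]
    rw [sumV_one, minusCard_one]
    rfl
  mul_mem' := by
    intro a b ha hb
    have ha' := intModEq_two_iff.mp ha
    have hb' := intModEq_two_iff.mp hb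
    refine intModEq_two_iff.mpr ?_
    rw [sumV_mul, ha', hb']
    push_cast at ha' hb' ⊢
    rw [minusCard_mul]
  inv_mem' := by
    intro a ha
    have ha' := intModEq_two_iff.mp ha
    refine intModEq_two_iff.mpr ?_
    have h1 := sumV_mul a⁻¹ a
    have h2 := minusCard_mul a⁻¹ a
    rw [inv_mul_cancel, sumV_one] at h1
    rw [inv_mul_cancel, minusCard_one] at h2
    push_cast at ha' h1 h2 ⊢
    linear_combination h1.symm - h2.symm - ha'

/-- The affine Weyl group of type `D̃ₙ`, as the intersection of the two `B̃ₙ`'s. -/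
def WD (n : ℕ) : Subgroup (WC n) := WB n ⊓ Bbar n

instance : DecidablePred (fun k : ℤ => Even k) := fun _ => decidable_of_iff _ Int.even_iff.symm
instance : DecidablePred (fun k : ℤ => Odd k) := fun _ => decidable_of_iff _ Int.odd_iff.symm

/-- The labelled cycle type `(m, k_e, k_o, l)` of an element of `W(C̃ₙ)` (intended for
involutions): `m` is the number of 2-cycles of `σ`, `k_e` (resp. `k_o`) is the number of
`i` with `σ(i) = -i` whose label `v_i` is even (resp. odd), and `l` is the number of fixed
points of `σ`. -/
def lct {n : ℕ} (x : WC n) : ℕ × ℕ × ℕ × ℕ :=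
  ((Finset.univ.filter fun i : Fin n => ((x.sigma : Equiv.Perm (Pt n)) (1, i)).2 ≠ i).card / 2,
   (Finset.univ.filter fun i : Fin n =>
      (x.sigma : Equiv.Perm (Pt n)) (1, i) = (-1, i) ∧ Even (x.vec i)).card,
   (Finset.univ.filter fun i : Fin n =>
      (x.sigma : Equiv.Perm (Pt n)) (1, i) = (-1, i) ∧ Odd (x.vec i)).card,
   (Finset.univ.filter fun i : Fin n => (x.sigma : Equiv.Perm (Pt n)) (1, i) = (1, i)).card)

/-- `f(x)`: twice the sum of the labels over one chosen entry of each 2-cycle (we choose the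
entry with the smaller index), plus the sum of the labels over the negative 1-cycles.  Only
its residue modulo 4 is ever used, and for involutions that residue does not depend on the
choice of entries. -/
def fval {n : ℕ} (x : WC n) : ℤ :=
  2 * (∑ i ∈ Finset.univ.filter
        (fun i : Fin n => i < ((x.sigma : Equiv.Perm (Pt n)) (1, i)).2), x.vec i)
  + ∑ i ∈ Finset.univ.filter
      (fun i : Fin n => (x.sigma : Equiv.Perm (Pt n)) (1, i) = (-1, i)), x.vec i

/-- The commuting graph on a set `X` of elements of a group: vertices are the elements
of `X`, and distinct vertices are adjacent exactly when they commute.  When `X` is a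
conjugacy class of involutions this is the commuting involution graph `C(G,X)`. -/
def commGraph {M : Type*} [Group M] (X : Set M) : SimpleGraph X where
  Adj a b := a ≠ b ∧ (a : M) * (b : M) = (b : M) * (a : M)
  symm := ⟨fun a b h => ⟨h.1.symm, h.2.symm⟩⟩
  loopless := ⟨fun a h => h.1 rfl⟩

/-- The conjugacy class of `x` under conjugation by a subgroup `G`. -/
def ConjugacyClassOf {M : Type*} [Group M] (G : Subgroup M) (x : M) : Set M :=
  {y | ∃ g ∈ G, g⁻¹ * x * g = y}

/-- `X` is a conjugacy class of involutions of the subgroup `G`. -/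
def IsInvolutionConjClass {M : Type*} [Group M] (G : Subgroup M) (X : Set M) : Prop :=
  ∃ x ∈ G, orderOf x = 2 ∧ X = ConjugacyClassOf G x

/-- Sign change at the single coordinate `k`. -/
def negAt {n : ℕ} (k : Fin n) : Equiv.Perm (Pt n) :=
  Function.Involutive.toPerm (fun p => if p.2 = k then (-p.1, p.2) else p) (by
    intro p
    by_cases h : p.2 = k <;> simp [h, Prod.ext_iff])

lemma negAt_mem {n : ℕ} (k : Fin n) : negAt k ∈ Hgrp n := by
  intro p
  show (if (negPt p).2 = k then (-(negPt p).1, (negPt p).2) else negPt p)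
      = negPt (if p.2 = k then (-p.1, p.2) else p)
  by_cases h : p.2 = k <;> simp [negPt, h]

/-- The positive transposition of the coordinates `a` and `b`. -/
def swapPos {n : ℕ} (a b : Fin n) : Equiv.Perm (Pt n) :=
  Equiv.prodCongr (Equiv.refl ℤˣ) (Equiv.swap a b)

lemma swapPos_mem {n : ℕ} (a b : Fin n) : swapPos a b ∈ Hgrp n := fun _ => rfl

/-- The negative transposition of the coordinates `a` and `b` (for `a ≠ b` it sends
`a ↦ -b` and `b ↦ -a`). -/
def negSwap {n : ℕ} (a b : Fin n) : Equiv.Perm (Pt n) := negAt b * negAt a * swapPos a b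

lemma negSwap_mem {n : ℕ} (a b : Fin n) : negSwap a b ∈ Hgrp n :=
  mul_mem (mul_mem (negAt_mem b) (negAt_mem a)) (swapPos_mem a b)

/-- Constructor for elements of `W(C̃ₙ)`. -/
def mkW {n : ℕ} (σ : Equiv.Perm (Pt n)) (h : σ ∈ Hgrp n) (v : Fin n → ℤ) : WC n := ⟨⟨σ, h⟩, v⟩

/-- The simple reflection `r₁ = (σ, 0)` with `σ(1) = -1` (take `k = 0`); more generally
`(σ, 0)` with `σ(k) = -k`. -/
def rFirstGen (n : ℕ) (k : Fin n) : WC n := mkW (negAt k) (negAt_mem k) 0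

/-- The simple reflections `rᵢ = (σ, 0)`, `2 ≤ i ≤ n`, where `σ` exchanges `a` and `b`
positively (take `a, b` adjacent). -/
def swapGen (n : ℕ) (a b : Fin n) : WC n := mkW (swapPos a b) (swapPos_mem a b) 0

/-- The simple reflection `r_{n+1} = (σ, eₙ)` with `σ(n) = -n` (take `k = n-1`). -/
def rLastGen (n : ℕ) (k : Fin n) : WC n := mkW (negAt k) (negAt_mem k) (Pi.single k 1)

/-- The reflections `s = (σ, e_{n-1} + eₙ)` (take `a = n-2`, `b = n-1`) and
`t = (σ, e₁ + e₂)` (take `a = 0`, `b = 1`), where `σ(a) = -b`, `σ(b) = -a`. -/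
def negSwapGen (n : ℕ) (a b : Fin n) : WC n :=
  mkW (negSwap a b) (negSwap_mem a b) (Pi.single a 1 + Pi.single b 1)

/-- The projection `π : W(C̃ₙ) → Hₙ`, `(σ, v) ↦ σ`. -/
def projHom (n : ℕ) : WC n →* Equiv.Perm (Pt n) where
  toFun x := (x.sigma : Equiv.Perm (Pt n))
  map_one' := rfl
  map_mul' _ _ := rfl

/-- The action of a signed permutation on real vectors. -/
def actR {n : ℕ} (σ : Equiv.Perm (Pt n)) (u : Fin n → ℝ) : Fin n → ℝ :=
  fun j => (((σ (1, j)).1 : ℤ) : ℝ) * u (σ (1, j)).2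

/-- The affine action of `w = (σ,v) ∈ W(C̃ₙ)` on `ℝⁿ`: `u ↦ u^σ + v`. -/
def affAct {n : ℕ} (x : WC n) : (Fin n → ℝ) → (Fin n → ℝ) :=
  fun u => actR (x.sigma : Equiv.Perm (Pt n)) u + fun i => ((x.vec i : ℤ) : ℝ)

/-- The affine involution `φ` of `ℝⁿ` with `φ(u)ᵢ = 1/2 - u_{n+1-i}`. -/
def phiR (n : ℕ) : (Fin n → ℝ) → (Fin n → ℝ) := fun u i => 1 / 2 - u i.rev


/-!
Every element of `W(C̃ₙ)` factors as `(σ, 0)(1, v)`. The generators `r₁, …, rₙ` generate the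
copy of `Hₙ`: adjacent transpositions generate the symmetric group, and conjugating the sign
change `r₁` by transpositions gives every sign change. Since `s = (σ_s, 0)(1, e_{n-1} + eₙ)`, the
subgroup generated with `s` contains that translation and, conjugating by `Hₙ`, every
`(1, eᵢ - eⱼ)` and `(1, 2eᵢ)`; these span the even-sum lattice. Conversely all generators have
even `Σ`, and `Σ mod 2` is a homomorphism with `Σ r_{n+1} = 1`, so `W(B̃ₙ)` has index two.
-/

theorem closure_swap_succ_eq_top (n : ℕ) :
    Subgroup.closure {σ : Perm (Fin n) | ∃ i j : Fin n, (j : ℕ) = i + 1 ∧ σ = swap i j} = ⊤ := by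
  set K := Subgroup.closure {σ : Perm (Fin n) | ∃ i j : Fin n, (j : ℕ) = i + 1 ∧ σ = swap i j}
  have hadj (i j : Fin n) (h : (j : ℕ) = i + 1) : swap i j ∈ K :=
    Subgroup.subset_closure ⟨i, j, h, rfl⟩
  -- Conjugating `swap m (m+1)` by `swap i m` gives `swap i (m+1)`.
  have hle : ∀ (m : ℕ) (hm : m < n) (i : Fin n), (i : ℕ) ≤ m → swap i ⟨m, hm⟩ ∈ K := by
    intro m
    induction m with
    | zero =>
      intro hm i hi
      rw [show i = ⟨0, hm⟩ from Fin.ext (Nat.le_zero.mp hi), swap_self]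
      exact K.one_mem
    | succ m ih =>
      intro hm i hi
      rcases (show (i : ℕ) = m + 1 ∨ (i : ℕ) ≤ m by omega) with h | h
      · rw [show i = ⟨m + 1, hm⟩ from Fin.ext h, swap_self]
        exact K.one_mem
      · have hconj := swap_apply_apply (swap i ⟨m, by omega⟩) ⟨m, by omega⟩ ⟨m + 1, hm⟩
        rw [swap_apply_right, swap_apply_of_ne_of_ne (Fin.ne_of_val_ne (by simp; omega))
          (Fin.ne_of_val_ne (by simp))] at hconj
        rw [hconj]
        exact mul_mem (mul_mem (ih _ i h) (hadj _ _ rfl)) (inv_mem (ih _ i h))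
  rw [eq_top_iff, ← Perm.closure_isSwap, Subgroup.closure_le]
  rintro _ ⟨i, j, -, rfl⟩
  rcases le_total i j with h | h
  · exact hle j j.isLt i h
  · rw [swap_comm]
    exact hle i i.isLt j h

section Hyperoctahedral

variable {n : ℕ}

lemma negAt_apply (k : Fin n) (p : Pt n) :
    negAt k p = if p.2 = k then (-p.1, p.2) else p := rfl

def permEmb (n : ℕ) : Perm (Fin n) →* Hgrp n where
  toFun π := ⟨Equiv.prodCongr (Equiv.refl ℤˣ) π, fun _ => rfl⟩
  map_one' := rfl
  map_mul' _ _ := rfl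

lemma permEmb_apply (π : Perm (Fin n)) (p : Pt n) :
    (permEmb n π : Perm (Pt n)) p = (p.1, π p.2) := rfl

def signChangeHom (n : ℕ) : (Fin n → ℤˣ) →* Hgrp n where
  toFun ε := ⟨{ toFun := fun p => (ε p.2 * p.1, p.2)
                invFun := fun p => (ε p.2 * p.1, p.2)
                left_inv := fun p => by simp [← mul_assoc]
                right_inv := fun p => by simp [← mul_assoc] },
              fun p => by simp [negPt]⟩
  map_one' := by ext p <;> simp
  map_mul' ε η := by ext p <;> simp [mul_assoc]

lemma signChangeHom_apply (ε : Fin n → ℤˣ) (p : Pt n) :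
    (signChangeHom n ε : Perm (Pt n)) p = (ε p.2 * p.1, p.2) := rfl

lemma signChangeHom_mulSingle_neg_one (k : Fin n) :
    signChangeHom n (Pi.mulSingle k (-1)) = ⟨negAt k, negAt_mem k⟩ := by
  refine Subtype.ext (Equiv.ext fun p => ?_)
  by_cases h : p.2 = k <;> simp [signChangeHom_apply, negAt_apply, h]

lemma permEmb_mul_signChangeHom_mul_inv (π : Perm (Fin n)) (ε : Fin n → ℤˣ) :
    permEmb n π * signChangeHom n ε * (permEmb n π)⁻¹ = signChangeHom n (ε ∘ π.symm) :=
  Subtype.ext (Equiv.ext fun p => Prod.ext rfl (π.apply_symm_apply p.2))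

lemma permEmb_mul_signChangeHom (σ : Hgrp n) :
    permEmb n (permOf σ) * signChangeHom n (fun i => ((σ : Perm (Pt n)) (1, i)).1) = σ := by
  refine Subtype.ext (Equiv.ext fun ⟨δ, i⟩ => ?_)
  rw [Hgrp_apply σ.2]
  exact Prod.ext (mul_comm _ _) rfl

theorem Hgrp_closure_eq_top (z : Fin n) :
    Subgroup.closure ({⟨negAt z, negAt_mem z⟩} ∪
      {σ | ∃ i j : Fin n, (j : ℕ) = i + 1 ∧ σ = permEmb n (swap i j)}) = ⊤ := by
  set H := Subgroup.closure ({⟨negAt z, negAt_mem z⟩} ∪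
    {σ | ∃ i j : Fin n, (j : ℕ) = i + 1 ∧ σ = permEmb n (swap i j)})
  have hperm (π : Perm (Fin n)) : permEmb n π ∈ H := by
    have hle : Subgroup.closure {σ : Perm (Fin n) | ∃ i j : Fin n, (j : ℕ) = i + 1 ∧ σ = swap i j}
        ≤ H.comap (permEmb n) := by
      rw [Subgroup.closure_le]
      rintro _ ⟨i, j, h, rfl⟩
      exact Subgroup.subset_closure (Or.inr ⟨i, j, h, rfl⟩)
    rw [closure_swap_succ_eq_top] at hle
    exact hle (Subgroup.mem_top π)
  have hneg (k : Fin n) : signChangeHom n (Pi.mulSingle k (-1)) ∈ H := by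
    have hz : signChangeHom n (Pi.mulSingle z (-1)) ∈ H := by
      rw [signChangeHom_mulSingle_neg_one]
      exact Subgroup.subset_closure (Or.inl rfl)
    have hconj := permEmb_mul_signChangeHom_mul_inv (swap z k) (Pi.mulSingle z (-1))
    rw [Pi.mulSingle_comp_equiv, symm_symm, swap_apply_left] at hconj
    rw [← hconj]
    exact mul_mem (mul_mem (hperm _) hz) (inv_mem (hperm _))
  have hsign (ε : Fin n → ℤˣ) : signChangeHom n ε ∈ H := by
    change ε ∈ H.comap (signChangeHom n)
    rw [← Finset.univ_prod_mulSingle ε]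
    refine Subgroup.prod_mem _ fun k _ => ?_
    rcases Int.units_eq_one_or (ε k) with h | h
    · simp [h]
    · rw [h]
      exact hneg k
  rw [eq_top_iff]
  intro σ _
  rw [← permEmb_mul_signChangeHom σ]
  exact mul_mem (hperm _) (hsign _)

end Hyperoctahedral

theorem AddSubgroup.mem_of_even_sum {ι : Type*} [Fintype ι] [DecidableEq ι]
    {T : AddSubgroup (ι → ℤ)} {a : ι} (hdouble : Pi.single a 2 ∈ T)
    (hdiff : ∀ i, Pi.single i 1 - Pi.single a 1 ∈ T) {v : ι → ℤ} (hv : Even (∑ i, v i)) :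
    v ∈ T := by
  obtain ⟨m, hm⟩ := hv
  have hdecomp : v = ∑ i, v i • (Pi.single i 1 - Pi.single a 1) + m • Pi.single a 2 := by
    funext j
    by_cases hj : j = a
    · subst hj
      simp [Finset.sum_apply, Pi.single_apply, mul_sub, Finset.sum_sub_distrib, hm]
      ring
    · simp [Finset.sum_apply, Pi.single_apply, hj]
  rw [hdecomp]
  exact add_mem (sum_mem fun i _ => zsmul_mem (hdiff i) _) (zsmul_mem hdouble m)

section Translations

variable {n : ℕ}

def pureHom (n : ℕ) : Hgrp n →* WC n where
  toFun σ := ⟨σ, 0⟩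
  map_one' := rfl
  map_mul' σ τ := WC.ext rfl (by simp [actV_zero])

def translationHom (n : ℕ) : Multiplicative (Fin n → ℤ) →* WC n where
  toFun v := ⟨1, v.toAdd⟩
  map_one' := rfl
  map_mul' u v := WC.ext (mul_one 1).symm (by simp [actV_one])

lemma pureHom_mul_translationHom (x : WC n) :
    pureHom n x.sigma * translationHom n (.ofAdd x.vec) = x :=
  WC.ext (mul_one _) (by simp [pureHom, translationHom, actV_zero])

lemma pureHom_inv_mul_translationHom_mul (σ : Hgrp n) (v : Fin n → ℤ) :
    (pureHom n σ)⁻¹ * translationHom n (.ofAdd v) * pureHom n σ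
      = translationHom n (.ofAdd (actV (σ : Perm (Pt n)) v)) := by
  refine WC.ext (by simp [pureHom, translationHom]) ?_
  simp [pureHom, translationHom, actV_zero]

def translations (K : Subgroup (WC n)) : AddSubgroup (Fin n → ℤ) :=
  Subgroup.toAddSubgroup' (K.comap (translationHom n))

lemma mem_translations {K : Subgroup (WC n)} {v : Fin n → ℤ} :
    v ∈ translations K ↔ translationHom n (.ofAdd v) ∈ K := Iff.rfl

lemma actV_mem_translations {K : Subgroup (WC n)} (hK : ∀ σ, pureHom n σ ∈ K) (σ : Hgrp n)
    {v : Fin n → ℤ} (hv : v ∈ translations K) : actV (σ : Perm (Pt n)) v ∈ translations K := by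
  rw [mem_translations, ← pureHom_inv_mul_translationHom_mul]
  exact mul_mem (mul_mem (inv_mem (hK σ)) hv) (hK σ)

lemma actV_permEmb (π : Perm (Fin n)) (v : Fin n → ℤ) :
    actV (permEmb n π : Perm (Pt n)) v = v ∘ π := by
  funext j
  simp [actV, permEmb_apply]

lemma actV_negAt (k : Fin n) (v : Fin n → ℤ) :
    actV (negAt k) v = Function.update v k (-v k) := by
  funext j
  by_cases h : j = k
  · subst h; simp [actV, negAt_apply]
  · simp [actV, negAt_apply, h]

lemma even_sum_mem_translations {K : Subgroup (WC n)} (hK : ∀ σ, pureHom n σ ∈ K) {a b : Fin n}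
    (hab : a ≠ b) (hs : Pi.single a 1 + Pi.single b 1 ∈ translations K) {v : Fin n → ℤ}
    (hv : Even (∑ i, v i)) : v ∈ translations K := by
  have hdiff (i : Fin n) : Pi.single i 1 - Pi.single a 1 ∈ translations K := by
    by_cases hia : i = a
    · simp [hia]
    -- Move `b` to `i` by a permutation fixing `a`, then flip the sign at `a`.
    have hperm : actV (permEmb n (swap b i) : Perm (Pt n)) (Pi.single a 1 + Pi.single b 1)
        = Pi.single a 1 + Pi.single i 1 := by
      funext j
      simp only [actV_permEmb, Function.comp_apply, Pi.add_apply, Pi.single_apply, swap_apply_def]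
      split_ifs <;> simp_all
    have hflip : actV (negAt a) (Pi.single a 1 + Pi.single i 1)
        = Pi.single i 1 - Pi.single a 1 := by
      funext j
      simp only [actV_negAt, Function.update_apply, Pi.add_apply, Pi.sub_apply, Pi.single_apply]
      split_ifs <;> simp_all
    rw [← hflip, ← hperm]
    exact actV_mem_translations hK ⟨negAt a, negAt_mem a⟩ (actV_mem_translations hK _ hs)
  have hdouble : (Pi.single a 2 : Fin n → ℤ)
      = (Pi.single a 1 + Pi.single b 1) - (Pi.single b 1 - Pi.single a 1) := by
    funext j
    simp only [Pi.add_apply, Pi.sub_apply, Pi.single_apply]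
    split_ifs <;> simp_all
  exact AddSubgroup.mem_of_even_sum (hdouble ▸ sub_mem hs (hdiff b)) hdiff hv

end Translations

section AffineWeyl

variable {n : ℕ}

lemma mem_WB_iff {x : WC n} : x ∈ WB n ↔ Even (sumV x) := Iff.rfl

lemma pureHom_mem_of_generators_mem {K : Subgroup (WC n)} {z : Fin n} (hz : rFirstGen n z ∈ K)
    (hadj : ∀ i j : Fin n, (j : ℕ) = i + 1 → swapGen n i j ∈ K) (σ : Hgrp n) :
    pureHom n σ ∈ K := by
  have hle : Subgroup.closure ({⟨negAt z, negAt_mem z⟩} ∪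
      {σ | ∃ i j : Fin n, (j : ℕ) = i + 1 ∧ σ = permEmb n (swap i j)}) ≤ K.comap (pureHom n) := by
    rw [Subgroup.closure_le]
    rintro _ (rfl | ⟨i, j, h, rfl⟩)
    · exact hz
    · exact hadj i j h
  rw [Hgrp_closure_eq_top] at hle
  exact hle (Subgroup.mem_top σ)

theorem WB_le_of_generators_mem {K : Subgroup (WC n)} {z a b : Fin n} (hz : rFirstGen n z ∈ K)
    (hadj : ∀ i j : Fin n, (j : ℕ) = i + 1 → swapGen n i j ∈ K) (hab : a ≠ b)
    (hs : negSwapGen n a b ∈ K) : WB n ≤ K := by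
  have hpure := pureHom_mem_of_generators_mem hz hadj
  have htrans : Pi.single a 1 + Pi.single b 1 ∈ translations K := by
    change translationHom n (.ofAdd (negSwapGen n a b).vec) ∈ K
    rw [eq_inv_mul_of_mul_eq (pureHom_mul_translationHom (negSwapGen n a b))]
    exact mul_mem (inv_mem (hpure _)) hs
  intro w hw
  rw [← pureHom_mul_translationHom w]
  exact mul_mem (hpure _) (even_sum_mem_translations hpure hab htrans hw)

lemma sumV_rLastGen (k : Fin n) : sumV (rLastGen n k) = 1 := by
  simp [sumV, rLastGen, mkW]

theorem WB_index_eq_two (hn : 0 < n) : (WB n).index = 2 := by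
  rw [Subgroup.index_eq_two_iff]
  refine ⟨rLastGen n ⟨0, hn⟩, fun x => ?_⟩
  rw [mem_WB_iff, mem_WB_iff, even_int_iff_zmod, even_int_iff_zmod, sumV_mul, sumV_rLastGen]
  generalize ((sumV x : ℤ) : ZMod 2) = c
  revert c
  decide

end AffineWeyl

theorem WB_generated_and_index_two (n : ℕ) (hn : 3 ≤ n) :
    Subgroup.closure
      ({rFirstGen n ⟨0, by omega⟩}
        ∪ {x : WC n | ∃ j : ℕ, ∃ hj : j + 1 < n, x = swapGen n ⟨j, by omega⟩ ⟨j + 1, hj⟩}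
        ∪ {negSwapGen n ⟨n - 2, by omega⟩ ⟨n - 1, by omega⟩}) = WB n ∧
    (WB n).index = 2 := by
  refine ⟨le_antisymm ?_ ?_, WB_index_eq_two (by omega)⟩
  · rw [Subgroup.closure_le]
    rintro _ ((rfl | ⟨j, hj, rfl⟩) | rfl)
    · simp [mem_WB_iff, sumV, rFirstGen, mkW]
    · simp [mem_WB_iff, sumV, swapGen, mkW]
    · simp [mem_WB_iff, sumV, negSwapGen, mkW, Finset.sum_add_distrib]
  · refine WB_le_of_generators_mem (Subgroup.subset_closure (Or.inl (Or.inl rfl)))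
      (fun i j h => Subgroup.subset_closure (Or.inl (Or.inr ⟨i, by omega, ?_⟩)))
      (Fin.ne_of_val_ne (by simp; omega)) (Subgroup.subset_closure (Or.inr rfl))
    exact congrArg (swapGen n i) (Fin.ext h)
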